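/- Let d ≥ 2 and let B > 0 be a constant such that for every n ≥ d, every function h : {-1,1}^n → ℝ of degree at most d satisfies (Σ_{S ⊆ {1,…,n}} |ĥ(S)|^{2d/(d+1)})^{(d+1)/(2d)} ≤ B ‖h‖_∞. Then for every n ≥ d and every function f : {-1,1}^n → ℝ, inf_{g ∈ P_{>d}^n} ‖f − g‖_1 ≤ B · (Σ_{|S| ≤ d} |f̂(S)|^{2d/(d−1)})^{(d−1)/(2d)}. -/

import Mathlib

open Finset
open scoped ENNReal

noncomputable section

/-- The Walsh function `w_S` on the discrete cube `{-1,1}^n`, where a point of the cube is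
encoded as `x : Fin n → Bool`, a coordinate `b : Bool` representing the real number
`if b then 1 else -1`. -/
def walsh (n : ℕ) (S : Finset (Fin n)) (x : Fin n → Bool) : ℝ :=
  ∏ i ∈ S, (if x i then (1 : ℝ) else -1)

/-- The Fourier--Walsh coefficient `f̂(S) = E[f ⬝ w_S]`. -/
def walshCoeff {n : ℕ} (f : (Fin n → Bool) → ℝ) (S : Finset (Fin n)) : ℝ :=
  (∑ x : Fin n → Bool, f x * walsh n S x) / 2 ^ n

/-- The mean `E f` of `f` with respect to the uniform probability measure on the cube. -/
def cubeMean {n : ℕ} (f : (Fin n → Bool) → ℝ) : ℝ :=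
  (∑ x : Fin n → Bool, f x) / 2 ^ n

/-- The `L_r` norm (`r ∈ [1,∞]`, encoded as `r : ℝ≥0∞`) of `f : {-1,1}^n → ℝ` with respect to
the uniform probability measure; `r = ∞` gives the sup norm. -/
def cubeNorm {n : ℕ} (r : ℝ≥0∞) (f : (Fin n → Bool) → ℝ) : ℝ :=
  if r = ⊤ then Finset.univ.sup' Finset.univ_nonempty (fun x => |f x|)
  else ((∑ x : Fin n → Bool, |f x| ^ r.toReal) / 2 ^ n) ^ (1 / r.toReal)

/-- `f ∈ 𝒫_I^n`: the Fourier--Walsh spectrum of `f` is contained in `I`. -/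
def spectrumIn {n : ℕ} (f : (Fin n → Bool) → ℝ) (I : Set ℕ) : Prop :=
  ∀ S : Finset (Fin n), S.card ∉ I → walshCoeff f S = 0

/-- The `L_r` distance of `f` from the tail space `𝒫_{>k}^n`. -/
def distFromTail {n : ℕ} (k : ℕ) (r : ℝ≥0∞) (f : (Fin n → Bool) → ℝ) : ℝ :=
  sInf {t : ℝ | ∃ g : (Fin n → Bool) → ℝ,
    spectrumIn g {j | k < j} ∧ t = cubeNorm r (fun x => f x - g x)}

/-- The coefficient `c(k,ℓ)` of `x^ℓ` in the `k`-th Chebyshev polynomial of the first kind. -/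
def chebC (k ℓ : ℕ) : ℝ := (Polynomial.Chebyshev.T ℝ k).coeff ℓ

/-- The modified Chebyshev coefficient `c̃(k,ℓ)`. -/
def chebCt (k ℓ : ℕ) : ℝ := if Even (k - ℓ) then chebC k ℓ else chebC (k - 1) ℓ

/-- The `ℓ`-th elementary symmetric multilinear polynomial on `{-1,1}^n`. -/
def elemSymPoly (n ℓ : ℕ) (x : Fin n → Bool) : ℝ :=
  ∑ S ∈ Finset.powersetCard ℓ (Finset.univ : Finset (Fin n)), walsh n S x

/-- The level-`ℓ` Rademacher projection `Rad_ℓ f`. -/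
def radProj {n : ℕ} (ℓ : ℕ) (f : (Fin n → Bool) → ℝ) (x : Fin n → Bool) : ℝ :=
  ∑ S ∈ Finset.powersetCard ℓ (Finset.univ : Finset (Fin n)), walshCoeff f S * walsh n S x

section auxlemmas
variable {n : ℕ}
variable {n : ℕ}

lemma cube_sum_prod (g : Fin n → Bool → ℝ) :
    ∑ x : Fin n → Bool, ∏ i, g i (x i) = ∏ i, (∑ b, g i b) := by
  rw [Finset.prod_univ_sum, Fintype.piFinset_univ]

lemma walsh_eq_prod_univ (S : Finset (Fin n)) (x : Fin n → Bool) :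
    walsh n S x = ∏ i, (if i ∈ S then (if x i then (1:ℝ) else -1) else 1) := by
  rw [walsh]
  rw [Finset.prod_ite_mem, Finset.univ_inter]

lemma walsh_orthogonal (S T : Finset (Fin n)) :
    ∑ x : Fin n → Bool, walsh n S x * walsh n T x = if S = T then (2:ℝ)^n else 0 := by
  have h : ∀ x : Fin n → Bool, walsh n S x * walsh n T x
      = ∏ i, ((if i ∈ S then (if x i then (1:ℝ) else -1) else 1) *
              (if i ∈ T then (if x i then (1:ℝ) else -1) else 1)) := by
    intro x; rw [walsh_eq_prod_univ, walsh_eq_prod_univ, Finset.prod_mul_distrib]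
  simp only [h]
  rw [cube_sum_prod (fun i b => (if i ∈ S then (if b then (1:ℝ) else -1) else 1) *
    (if i ∈ T then (if b then (1:ℝ) else -1) else 1))]
  have hfac : ∀ i : Fin n,
      (∑ b : Bool, (if i ∈ S then (if b then (1:ℝ) else -1) else 1) *
        (if i ∈ T then (if b then (1:ℝ) else -1) else 1))
      = if (i ∈ S ↔ i ∈ T) then 2 else 0 := by
    intro i
    by_cases hS : i ∈ S <;> by_cases hT : i ∈ T <;>
      simp [hS, hT, Fintype.sum_bool] <;> norm_num
  simp only [hfac]
  by_cases h' : S = T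
  · subst h'
    simp [Finset.prod_const, Finset.card_univ]
  · rw [if_neg h']
    obtain ⟨i, hi⟩ : ∃ i, ¬(i ∈ S ↔ i ∈ T) := by
      by_contra hc
      push_neg at hc
      exact h' (Finset.ext fun i => (hc i))
    exact Finset.prod_eq_zero (Finset.mem_univ i) (by simp [hi])

lemma walsh_point (x y : Fin n → Bool) :
    ∑ S : Finset (Fin n), walsh n S x * walsh n S y = if x = y then (2:ℝ)^n else 0 := by
  have h1 : ∑ S : Finset (Fin n), walsh n S x * walsh n S y
      = ∑ S ∈ (Finset.univ : Finset (Fin n)).powerset,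
          (∏ i ∈ S, ((if x i then (1:ℝ) else -1) * (if y i then (1:ℝ) else -1))) *
            ∏ _i ∈ Finset.univ \ S, (1:ℝ) := by
    rw [Finset.powerset_univ]
    refine Finset.sum_congr rfl fun S _ => ?_
    rw [walsh, walsh, ← Finset.prod_mul_distrib, Finset.prod_const_one, mul_one]
  rw [h1, ← Finset.prod_add]
  have hfac : ∀ i : Fin n,
      ((if x i then (1:ℝ) else -1) * (if y i then (1:ℝ) else -1) + 1)
      = if x i = y i then 2 else 0 := by
    intro i; cases hx : x i <;> cases hy : y i <;> norm_num
  simp only [hfac]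
  by_cases h' : x = y
  · subst h'
    simp [Finset.prod_const, Finset.card_univ]
  · rw [if_neg h']
    obtain ⟨i, hi⟩ : ∃ i, ¬ x i = y i := by
      by_contra hc; push_neg at hc; exact h' (funext hc)
    exact Finset.prod_eq_zero (Finset.mem_univ i) (by simp [hi])

lemma walsh_inversion (g : (Fin n → Bool) → ℝ) (x : Fin n → Bool) :
    ∑ S : Finset (Fin n), walshCoeff g S * walsh n S x = g x := by
  have h2n : ((2:ℝ)^n) ≠ 0 := by positivity
  calc ∑ S : Finset (Fin n), walshCoeff g S * walsh n S x
      = ∑ S : Finset (Fin n), (∑ y, g y * (walsh n S y * walsh n S x)) / 2^n := by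
        refine Finset.sum_congr rfl fun S _ => ?_
        rw [walshCoeff, div_mul_eq_mul_div, Finset.sum_mul]
        congr 1
        exact Finset.sum_congr rfl fun y _ => by ring
    _ = (∑ y, ∑ S : Finset (Fin n), g y * (walsh n S y * walsh n S x)) / 2^n := by
        rw [← Finset.sum_div, Finset.sum_comm]
    _ = (∑ y, g y * (if y = x then (2:ℝ)^n else 0)) / 2^n := by
        congr 1
        refine Finset.sum_congr rfl fun y _ => ?_
        rw [← Finset.mul_sum, walsh_point]
    _ = g x := by
        simp only [mul_ite, mul_zero]
        rw [Finset.sum_ite_eq' Finset.univ x (fun y => g y * 2^n)]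
        simp [h2n]

lemma parseval (φ c : (Fin n → Bool) → ℝ) :
    ∑ S : Finset (Fin n), walshCoeff φ S * walshCoeff c S
      = (∑ x, φ x * c x) / 2^n := by
  have h1 : ∀ x, φ x * c x = ∑ S : Finset (Fin n), walshCoeff c S * (φ x * walsh n S x) := by
    intro x
    conv_lhs => rw [← walsh_inversion c x]
    rw [Finset.mul_sum]
    exact Finset.sum_congr rfl fun S _ => by ring
  calc ∑ S : Finset (Fin n), walshCoeff φ S * walshCoeff c S
      = ∑ S : Finset (Fin n), (∑ x, walshCoeff c S * (φ x * walsh n S x)) / 2^n := by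
        refine Finset.sum_congr rfl fun S _ => ?_
        rw [walshCoeff, div_mul_eq_mul_div]
        congr 1
        rw [Finset.sum_mul]
        exact Finset.sum_congr rfl fun x _ => by ring
    _ = (∑ x, ∑ S : Finset (Fin n), walshCoeff c S * (φ x * walsh n S x)) / 2^n := by
        rw [← Finset.sum_div, Finset.sum_comm]
    _ = (∑ x, φ x * c x) / 2^n := by
        congr 1
        exact Finset.sum_congr rfl fun x _ => (h1 x).symm

lemma walshCoeff_walsh (S T : Finset (Fin n)) :
    walshCoeff (walsh n S) T = if S = T then 1 else 0 := by
  have h2n : ((2:ℝ)^n) ≠ 0 := by positivity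
  rw [walshCoeff, walsh_orthogonal]
  by_cases h : S = T <;> simp [h, h2n]

end auxlemmas

section mainaux
variable {n : ℕ}

abbrev EL1 (n : ℕ) : Type := PiLp 1 (fun _ : Fin n → Bool => ℝ)

lemma walshCoeff_add (a b : (Fin n → Bool) → ℝ) (S : Finset (Fin n)) :
    walshCoeff (a + b) S = walshCoeff a S + walshCoeff b S := by
  simp only [walshCoeff, Pi.add_apply, add_mul, Finset.sum_add_distrib, add_div]

lemma walshCoeff_smul (r : ℝ) (a : (Fin n → Bool) → ℝ) (S : Finset (Fin n)) :
    walshCoeff (r • a) S = r * walshCoeff a S := by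
  simp only [walshCoeff, Pi.smul_apply, smul_eq_mul, mul_assoc, ← Finset.mul_sum, mul_div_assoc]

lemma walshCoeff_zero (S : Finset (Fin n)) : walshCoeff (0 : (Fin n → Bool) → ℝ) S = 0 := by
  simp [walshCoeff]

def tailSpace (n d : ℕ) : Submodule ℝ (EL1 n) where
  carrier := {g | ∀ S : Finset (Fin n), S.card ≤ d → walshCoeff g S = 0}
  add_mem' := by
    intro a b ha hb S hS
    have h := walshCoeff_add (n := n) a b S
    rw [WithLp.ofLp_add, h, ha S hS, hb S hS, add_zero]
  zero_mem' := fun S _ => walshCoeff_zero S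
  smul_mem' := by
    intro r a ha S hS
    have h := walshCoeff_smul (n := n) r a S
    rw [WithLp.ofLp_smul, h, ha S hS, mul_zero]

lemma EL1_norm_eq (v : EL1 n) : ‖v‖ = ∑ x, |v x| := by
  rw [PiLp.norm_eq_sum (by norm_num : 0 < (1:ℝ≥0∞).toReal)]
  simp [Real.norm_eq_abs]

lemma cubeNorm_one_eq (φ : (Fin n → Bool) → ℝ) :
    cubeNorm 1 φ = (∑ x, |φ x|) / 2 ^ n := by
  rw [cubeNorm, if_neg (by simp)]
  simp [Real.rpow_one]

end mainaux

set_option maxHeartbeats 1000000 in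
/-- the discrete Bohnenblust--Hille inequality with constant `B` implies the dual
inequality: for `n ≥ d ≥ 2` and every `f`, the `L_1` distance of `f` from `𝒫_{>d}^n` is at most
`B (Σ_{|S|≤d} |f̂(S)|^{2d/(d-1)})^{(d-1)/(2d)}`. -/
theorem stmt_13 (d : ℕ) (hd : 2 ≤ d) (B : ℝ) (hB : 0 < B)
    (hBH : ∀ n : ℕ, d ≤ n → ∀ h : (Fin n → Bool) → ℝ, spectrumIn h {j | j ≤ d} →
      (∑ S : Finset (Fin n), |walshCoeff h S| ^ ((2 * (d : ℝ)) / ((d : ℝ) + 1))) ^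
          (((d : ℝ) + 1) / (2 * (d : ℝ))) ≤ B * cubeNorm ⊤ h) :
    ∀ n : ℕ, d ≤ n → ∀ f : (Fin n → Bool) → ℝ,
      distFromTail d 1 f ≤
        B * (∑ S ∈ Finset.filter (fun S : Finset (Fin n) => S.card ≤ d) Finset.univ,
          |walshCoeff f S| ^ ((2 * (d : ℝ)) / ((d : ℝ) - 1))) ^ (((d : ℝ) - 1) / (2 * (d : ℝ))) := by
  intro n hn f
  have hd1 : (1:ℝ) < (d:ℝ) := by exact_mod_cast hd.trans_lt' one_lt_two
  have hd0 : (0:ℝ) < (d:ℝ) := zero_lt_one.trans hd1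
  have h2n : (0:ℝ) < 2 ^ n := by positivity
  -- notation
  set A : ℝ := ∑ S ∈ Finset.filter (fun S : Finset (Fin n) => S.card ≤ d) Finset.univ,
      |walshCoeff f S| ^ ((2 * (d : ℝ)) / ((d : ℝ) - 1)) with hA
  set M : ℝ := B * A ^ (((d : ℝ) - 1) / (2 * (d : ℝ))) with hM
  have hA0 : 0 ≤ A := Finset.sum_nonneg fun S _ => by positivity
  have hM0 : 0 ≤ M := mul_nonneg hB.le (Real.rpow_nonneg hA0 _)
  -- the set defining distFromTail
  set D : Set ℝ := {t : ℝ | ∃ g : (Fin n → Bool) → ℝ,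
    spectrumIn g {j | d < j} ∧ t = cubeNorm 1 (fun x => f x - g x)} with hD
  have hbdd : BddBelow D := by
    refine ⟨0, fun t ht => ?_⟩
    obtain ⟨g, _, rfl⟩ := ht
    rw [cubeNorm_one_eq]
    positivity
  have hgoal : distFromTail d 1 f = sInf D := rfl
  rw [hgoal]
  -- the space and subspace
  haveI : FiniteDimensional ℝ (EL1 n) :=
    (WithLp.linearEquiv 1 ℝ ((Fin n → Bool) → ℝ)).symm.finiteDimensional
  set V : Submodule ℝ (EL1 n) := tailSpace n d with hV
  haveI : IsClosed (V : Set (EL1 n)) := Submodule.closed_of_finiteDimensional V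
  set L : ((Fin n → Bool) → ℝ) ≃ₗ[ℝ] EL1 n := (WithLp.linearEquiv 1 ℝ ((Fin n → Bool) → ℝ)).symm
    with hL
  by_cases hzero : (Submodule.Quotient.mk (L f) : EL1 n ⧸ V) = 0
  · -- f itself is in the tail space
    have hfV : L f ∈ V := (Submodule.Quotient.mk_eq_zero V).mp hzero
    have hfs : spectrumIn f {j | d < j} := by
      intro S hS
      exact hfV S (Nat.not_lt.mp hS)
    have h0D : cubeNorm 1 (fun x => f x - f x) ∈ D := ⟨f, hfs, rfl⟩
    refine (csInf_le hbdd h0D).trans ?_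
    rw [cubeNorm_one_eq]
    simpa using hM0
  · obtain ⟨g, hg1, hg2⟩ := exists_dual_vector ℝ (Submodule.Quotient.mk (L f) : EL1 n ⧸ V) (norm_ne_zero_iff.mpr hzero)
    set Ψ : ((Fin n → Bool) → ℝ) →ₗ[ℝ] ℝ :=
      g.toLinearMap ∘ₗ (V.mkQ ∘ₗ L.toLinearMap) with hΨ
    set c : (Fin n → Bool) → ℝ := fun x => Ψ (Pi.single x (1:ℝ) : (Fin n → Bool) → ℝ) with hc
    have hΨapp : ∀ φ : (Fin n → Bool) → ℝ,
        Ψ φ = g (Submodule.Quotient.mk (L φ)) := fun φ => rfl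
    have hsingle : ∀ φ : (Fin n → Bool) → ℝ, φ = ∑ x : Fin n → Bool, φ x • (Pi.single x (1:ℝ) : (Fin n → Bool) → ℝ) := by
      intro φ; funext y
      rw [Finset.sum_apply]
      simp [Pi.single_apply]
    have hΨsum : ∀ φ : (Fin n → Bool) → ℝ, Ψ φ = ∑ x, φ x * c x := by
      intro φ
      conv_lhs => rw [hsingle φ]
      rw [map_sum]
      exact Finset.sum_congr rfl fun x _ => by rw [map_smul, smul_eq_mul]
    -- |c x| ≤ 1
    have hcbound : ∀ x, |c x| ≤ 1 := by
      intro x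
      have h1 : |c x| = ‖g (Submodule.Quotient.mk (L ((Pi.single x (1:ℝ) : (Fin n → Bool) → ℝ))))‖ := by
        rw [Real.norm_eq_abs]; rfl
      have h2 : ‖g (Submodule.Quotient.mk (L ((Pi.single x (1:ℝ) : (Fin n → Bool) → ℝ))))‖
          ≤ ‖g‖ * ‖(Submodule.Quotient.mk (L ((Pi.single x (1:ℝ) : (Fin n → Bool) → ℝ))) : EL1 n ⧸ V)‖ := g.le_opNorm _
      have h3 : ‖(Submodule.Quotient.mk (L ((Pi.single x (1:ℝ) : (Fin n → Bool) → ℝ))) : EL1 n ⧸ V)‖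
          ≤ ‖L ((Pi.single x (1:ℝ) : (Fin n → Bool) → ℝ))‖ := Submodule.Quotient.norm_mk_le _ _
      have h4 : ‖L ((Pi.single x (1:ℝ) : (Fin n → Bool) → ℝ))‖ = 1 := by
        rw [EL1_norm_eq]
        have : ∀ y : Fin n → Bool, (L ((Pi.single x (1:ℝ) : (Fin n → Bool) → ℝ))) y
            = (Pi.single x (1:ℝ) : (Fin n → Bool) → ℝ) y := fun _ => rfl
        simp only [this, Pi.single_apply, apply_ite abs, abs_one, abs_zero]
        rw [Finset.sum_ite_eq' Finset.univ x (fun _ => (1:ℝ))]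
        simp
      rw [h1, hg1, one_mul] at *
      exact h2.trans (h3.trans_eq h4)
    -- c has degree at most d
    have hcspec : spectrumIn c {j | j ≤ d} := by
      intro S hS
      have hSd : d < S.card := Nat.not_le.mp hS
      have hwV : L (walsh n S) ∈ V := by
        intro T hT
        have hne : S ≠ T := fun h => absurd (h ▸ hT) (Nat.not_le.mpr hSd)
        have := walshCoeff_walsh (n := n) S T
        rw [if_neg hne] at this
        exact this
      have hΨw : Ψ (walsh n S) = 0 := by
        rw [hΨapp, (Submodule.Quotient.mk_eq_zero V).mpr hwV, map_zero]
      rw [walshCoeff]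
      rw [show (∑ x, c x * walsh n S x) = ∑ x, walsh n S x * c x from
        Finset.sum_congr rfl fun x _ => mul_comm _ _]
      rw [← hΨsum, hΨw, zero_div]
    -- the BH bound on c
    have hsupc : cubeNorm ⊤ c ≤ 1 := by
      rw [cubeNorm, if_pos rfl]
      exact Finset.sup'_le _ _ fun x _ => hcbound x
    have hcp : (∑ S : Finset (Fin n), |walshCoeff c S| ^ ((2 * (d : ℝ)) / ((d : ℝ) + 1))) ^
        (((d : ℝ) + 1) / (2 * (d : ℝ))) ≤ B := by
      refine (hBH n hn c hcspec).trans ?_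
      calc B * cubeNorm ⊤ c ≤ B * 1 := by
            exact mul_le_mul_of_nonneg_left hsupc hB.le
        _ = B := mul_one B
    -- conjugate exponents
    have hconj : Real.HolderConjugate (2 * (d:ℝ) / ((d:ℝ) - 1)) (2 * (d:ℝ) / ((d:ℝ) + 1)) := by
      rw [Real.holderConjugate_iff]
      constructor
      · rw [lt_div_iff₀ (by linarith)]
        linarith
      · rw [inv_div, inv_div]
        field_simp
        ring
    -- the pairing bound
    have hpairle : ∑ S : Finset (Fin n), walshCoeff f S * walshCoeff c S ≤ M := by
      have hrestrict : ∑ S : Finset (Fin n), walshCoeff f S * walshCoeff c S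
          = ∑ S ∈ Finset.filter (fun S : Finset (Fin n) => S.card ≤ d) Finset.univ,
              walshCoeff f S * walshCoeff c S := by
        symm
        refine Finset.sum_filter_of_ne fun S _ hne => ?_
        by_contra hcard
        exact hne (by rw [hcspec S (by simpa using hcard), mul_zero])
      rw [hrestrict]
      have hHolder := Real.inner_le_Lp_mul_Lq
        (Finset.filter (fun S : Finset (Fin n) => S.card ≤ d) Finset.univ)
        (fun S => walshCoeff f S) (fun S => walshCoeff c S) hconj
      refine hHolder.trans ?_
      have h1p' : 1 / (2 * (d:ℝ) / ((d:ℝ) - 1)) = ((d:ℝ) - 1) / (2 * (d:ℝ)) := one_div_div _ _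
      have h1p : 1 / (2 * (d:ℝ) / ((d:ℝ) + 1)) = ((d:ℝ) + 1) / (2 * (d:ℝ)) := one_div_div _ _
      rw [h1p', h1p]
      have hsub : (∑ S ∈ Finset.filter (fun S : Finset (Fin n) => S.card ≤ d) Finset.univ,
            |walshCoeff c S| ^ ((2 * (d:ℝ)) / ((d:ℝ) + 1)))
          ≤ ∑ S : Finset (Fin n), |walshCoeff c S| ^ ((2 * (d:ℝ)) / ((d:ℝ) + 1)) := by
        refine Finset.sum_le_sum_of_subset_of_nonneg (Finset.filter_subset _ _)
          fun S _ _ => by positivity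
      have hcfin : (∑ S ∈ Finset.filter (fun S : Finset (Fin n) => S.card ≤ d) Finset.univ,
            |walshCoeff c S| ^ ((2 * (d:ℝ)) / ((d:ℝ) + 1))) ^ (((d:ℝ) + 1) / (2 * (d:ℝ))) ≤ B := by
        refine le_trans ?_ hcp
        exact Real.rpow_le_rpow (Finset.sum_nonneg fun S _ => by positivity) hsub (by positivity)
      rw [hM]
      calc (∑ S ∈ Finset.filter (fun S : Finset (Fin n) => S.card ≤ d) Finset.univ,
            |walshCoeff f S| ^ (2 * (d:ℝ) / ((d:ℝ) - 1))) ^ (((d:ℝ) - 1) / (2 * (d:ℝ))) *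
          (∑ S ∈ Finset.filter (fun S : Finset (Fin n) => S.card ≤ d) Finset.univ,
            |walshCoeff c S| ^ (2 * (d:ℝ) / ((d:ℝ) + 1))) ^ (((d:ℝ) + 1) / (2 * (d:ℝ)))
          ≤ A ^ (((d:ℝ) - 1) / (2 * (d:ℝ))) * B := by
            refine mul_le_mul_of_nonneg_left ?_ (Real.rpow_nonneg ?_ _)
            · exact hcfin
            · exact Finset.sum_nonneg fun S _ => by positivity
        _ = M := by rw [hM, mul_comm]
    -- the norm of the quotient class
    have hkey : ‖(Submodule.Quotient.mk (L f) : EL1 n ⧸ V)‖ / 2 ^ n ≤ M := by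
      have hg2' : g (Submodule.Quotient.mk (L f)) = ‖(Submodule.Quotient.mk (L f) : EL1 n ⧸ V)‖ := by
        exact_mod_cast hg2
      have h1 : ‖(Submodule.Quotient.mk (L f) : EL1 n ⧸ V)‖ = ∑ x, f x * c x := by
        rw [← hg2', ← hΨapp, hΨsum]
      rw [h1, ← parseval f c]
      exact hpairle
    -- conclude via the infimum
    refine le_of_forall_pos_le_add fun ε hε => ?_
    obtain ⟨m, hm, hlt⟩ := Submodule.Quotient.norm_mk_lt
      (Submodule.Quotient.mk (L f) : EL1 n ⧸ V) (mul_pos hε h2n)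
    have hmemV : L f - m ∈ V := by
      have := (Submodule.Quotient.eq V).mp hm
      simpa using V.neg_mem this
    set gf : (Fin n → Bool) → ℝ := fun x => f x - m x with hgf
    have hgfs : spectrumIn gf {j | d < j} := by
      intro S hS
      exact hmemV S (Nat.not_lt.mp hS)
    have hin : cubeNorm 1 (fun x => f x - gf x) ∈ D := ⟨gf, hgfs, rfl⟩
    refine (csInf_le hbdd hin).trans ?_
    have heq : cubeNorm 1 (fun x => f x - gf x) = ‖m‖ / 2 ^ n := by
      rw [cubeNorm_one_eq, EL1_norm_eq]
      congr 1
      exact Finset.sum_congr rfl fun x _ => by rw [hgf]; ring_nf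
    rw [heq]
    have : ‖m‖ / 2 ^ n ≤ (‖(Submodule.Quotient.mk (L f) : EL1 n ⧸ V)‖ + ε * 2 ^ n) / 2 ^ n :=
      (div_le_div_iff_of_pos_right h2n).mpr hlt.le
    refine this.trans ?_
    rw [add_div, mul_div_assoc, div_self h2n.ne', mul_one]
    exact add_le_add_left hkey ε
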